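/- arXiv:1907.00268 — 2 statements merged into one kernel-verified Lean document; each statement's English description precedes it below -/
import Mathlib

section
/- For all integers n≥0, r≥0, k≥1 and every weak composition β=(β_1,…,β_m) of n, the map that adds 1 to every letter of every block is a bijection from OP^all_{r;β,k} onto OP_{0;(r,β_1,…,β_m),k} (ordered multiset partitions with content (r,β_1,…,β_m) and no zeros) that preserves each of the statistics inv, maj, dinv and minimaj; consequently D^{stat+}_{r;(β_1,…,β_m),k}(q)=D^{stat}_{0;(r,β_1,…,β_m),k}(q) for each stat∈{inv, maj, dinv, minimaj}. -/
open scoped BigOperators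

namespace omp

/-- The multiset `A(β) ∪ {0^r}`: the letter `i` (for `1 ≤ i ≤ m`) with multiplicity `β_i`,
together with `r` copies of the letter `0`. -/
def content (r : ℕ) (β : List ℕ) : Multiset ℕ :=
  Multiset.replicate r 0 +
    ∑ i ∈ Finset.range β.length, Multiset.replicate (β.getD i 0) (i + 1)

/-- `π` is an ordered multiset partition of `A(β) ∪ {0^r}` into `k` (nonempty) blocks,
with `0` allowed anywhere: the set `OP^all_{r;β,k}`. -/
def IsOPall (r : ℕ) (β : List ℕ) (k : ℕ) (π : List (Finset ℕ)) : Prop :=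
  π.length = k ∧ (∀ B ∈ π, B.Nonempty) ∧ (π.map Finset.val).sum = content r β

/-- Additionally, the last block does not contain `0`: the set `OP_{r;β,k}`. -/
def IsOP (r : ℕ) (β : List ℕ) (k : ℕ) (π : List (Finset ℕ)) : Prop :=
  IsOPall r β k π ∧ 0 ∉ π.getLastD ∅

/-- Ordered multiset partitions of `A(β) ∪ {0^r}` with shape `α`: `OP^all_{r;β,α}`. -/
def IsOPallSh (r : ℕ) (β α : List ℕ) (π : List (Finset ℕ)) : Prop :=
  (∀ B ∈ π, B.Nonempty) ∧ (π.map Finset.val).sum = content r β ∧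
    π.map Finset.card = α

/-- Shape `α` and last block avoiding `0`: `OP_{r;β,α}`. -/
def IsOPSh (r : ℕ) (β α : List ℕ) (π : List (Finset ℕ)) : Prop :=
  IsOPallSh r β α π ∧ 0 ∉ π.getLastD ∅

/-- The `i`-th block (0-indexed). -/
def blk (π : List (Finset ℕ)) (i : ℕ) : Finset ℕ := π.getD i ∅

open Classical in
/-- `inv`: pairs of a letter `a` in block `B_i` and the minimum `b` of a later block `B_j`
with `a > b`. -/
noncomputable def inv (π : List (Finset ℕ)) : ℕ :=
  ∑ i ∈ Finset.range π.length, ∑ j ∈ Finset.range π.length,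
    if i < j then
      ((blk π i).filter (fun (a : ℕ) => (blk π j).min < (a : WithBot ℕ))).card
    else 0

/-- The word `σ(π)`: each block written in decreasing order, blocks concatenated. -/
def sigmaWord (π : List (Finset ℕ)) : List ℕ :=
  (π.map (fun B => (B.sort (· ≤ ·)).reverse)).flatten

/-- The word `ind(π) = 0^{|B_1|} 1^{|B_2|} ⋯ (k-1)^{|B_k|}`. -/
def indWord (π : List (Finset ℕ)) : List ℕ :=
  (π.zipIdx.map (fun p => List.replicate p.1.card p.2)).flatten

/-- The major index of a word (positions are 1-based). -/
def majW (w : List ℕ) : ℕ :=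
  ∑ i ∈ Finset.range (w.length - 1),
    if w.getD (i + 1) 0 < w.getD i 0 then i + 1 else 0

/-- `maj(π)`: the sum of `ind(π)_{i+1}` over descents `σ_i > σ_{i+1}` of `σ(π)`. -/
def maj (π : List (Finset ℕ)) : ℕ :=
  ∑ i ∈ Finset.range ((sigmaWord π).length - 1),
    if (sigmaWord π).getD (i + 1) 0 < (sigmaWord π).getD i 0 then
      (indWord π).getD (i + 1) 0
    else 0

/-- `dinv(π)`: primary and secondary diagonal inversions, where `B_i^h` is the `h`-th smallest
element of block `B_i` (here `h` is 0-indexed). -/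
def dinv (π : List (Finset ℕ)) : ℕ :=
  ∑ i ∈ Finset.range π.length, ∑ j ∈ Finset.range π.length,
    if i < j then
      ((Finset.range (blk π i).card).filter (fun h =>
          h < (blk π j).card ∧
            ((blk π j).sort (· ≤ ·)).getD h 0 < ((blk π i).sort (· ≤ ·)).getD h 0)).card +
      ((Finset.range (blk π i).card).filter (fun h =>
          h + 1 < (blk π j).card ∧
            ((blk π j).sort (· ≤ ·)).getD (h + 1) 0 < ((blk π i).sort (· ≤ ·)).getD h 0)).card
    else 0

/-- `miniword(π)`, built from right to left: the last block in increasing order; inductively,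
if the word built so far begins with `s`, block `B_i` contributes its elements greater than `s`
in increasing order followed by its elements at most `s` in increasing order. -/
def miniword : List (Finset ℕ) → List ℕ
  | [] => []
  | B :: rest =>
    match miniword rest with
    | [] => B.sort (· ≤ ·)
    | s :: w =>
        ((B.filter (fun x => s < x)).sort (· ≤ ·) ++
          (B.filter (fun x => x ≤ s)).sort (· ≤ ·)) ++ s :: w

/-- `minimaj(π) = maj(miniword(π))`. -/
def minimaj (π : List (Finset ℕ)) : ℕ := majW (miniword π)

/-- `D^{stat}_{r;β,k}(q) = Σ_{π ∈ OP_{r;β,k}} q^{stat(π)}` (the set is finite, so the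
finite-support sum below is the intended polynomial). -/
noncomputable def D (r : ℕ) (β : List ℕ) (k : ℕ)
    (stat : List (Finset ℕ) → ℕ) : Polynomial ℕ :=
  ∑ᶠ π ∈ {π | IsOP r β k π}, Polynomial.X ^ stat π

/-- `D^{stat+}_{r;β,k}(q) = Σ_{π ∈ OP^all_{r;β,k}} q^{stat(π)}`. -/
noncomputable def Dall (r : ℕ) (β : List ℕ) (k : ℕ)
    (stat : List (Finset ℕ) → ℕ) : Polynomial ℕ :=
  ∑ᶠ π ∈ {π | IsOPall r β k π}, Polynomial.X ^ stat π

/-- `D^{stat}_{r;β,α}(q)`, the shape-refined generating function. -/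
noncomputable def DSh (r : ℕ) (β α : List ℕ)
    (stat : List (Finset ℕ) → ℕ) : Polynomial ℕ :=
  ∑ᶠ π ∈ {π | IsOPSh r β α π}, Polynomial.X ^ stat π

/-- `D^{stat+}_{r;β,α}(q)`, the shape-refined generating function with `0` allowed
in the last block. -/
noncomputable def DallSh (r : ℕ) (β α : List ℕ)
    (stat : List (Finset ℕ) → ℕ) : Polynomial ℕ :=
  ∑ᶠ π ∈ {π | IsOPallSh r β α π}, Polynomial.X ^ stat π

end omp

/-!
Adding `1` to every letter is a strictly increasing relabelling of the alphabet, and each of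
`inv`, `maj`, `dinv` and `minimaj` only compares letters with one another (besides counting block
sizes), so all four are invariant under any strictly increasing relabelling. The shift carries
the content `A(β) ∪ {0^r}` onto `A(r, β)`, which has no letter `0`; so the condition on the last
block is automatic, and subtracting `1` inverts the shift. The generating-function identities
follow by reindexing the sums along this bijection.
-/

namespace omp

variable {f : ℕ → ℕ}

theorem getD_map_lt_getD_map_iff (hf : StrictMono f) {v w : List ℕ} {i j : ℕ}
    (hi : i < v.length) (hj : j < w.length) :
    (v.map f).getD i 0 < (w.map f).getD j 0 ↔ v.getD i 0 < w.getD j 0 := by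
  rw [List.getD_eq_getElem _ _ (by simpa using hi), List.getD_eq_getElem _ _ (by simpa using hj),
    List.getD_eq_getElem _ _ hi, List.getD_eq_getElem _ _ hj, List.getElem_map,
    List.getElem_map, hf.lt_iff_lt]

theorem sort_image (hf : StrictMono f) (B : Finset ℕ) :
    (B.image f).sort (· ≤ ·) = (B.sort (· ≤ ·)).map f := by
  have := (hf.strictMonoOn (B : Set ℕ)).map_finsetSort (f := ⟨f, hf.injective⟩)
  rwa [Finset.map_eq_image, eq_comm] at this

theorem min_image (hf : StrictMono f) (B : Finset ℕ) : (B.image f).min = B.min.map f := by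
  rcases B.eq_empty_or_nonempty with rfl | hB
  · simp
  · rw [← Finset.coe_min' hB, ← Finset.coe_min' (hB.image f), Finset.min'_image hf.monotone,
      WithTop.map_coe]

theorem filter_lt_image (hf : StrictMono f) (B : Finset ℕ) (s : ℕ) :
    (B.image f).filter (f s < ·) = (B.filter (s < ·)).image f := by
  simp only [Finset.filter_image, hf.lt_iff_lt]

theorem filter_le_image (hf : StrictMono f) (B : Finset ℕ) (s : ℕ) :
    (B.image f).filter (· ≤ f s) = (B.filter (· ≤ s)).image f := by
  simp only [Finset.filter_image, hf.le_iff_le]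

theorem blk_map_image (π : List (Finset ℕ)) (i : ℕ) :
    blk (π.map (Finset.image f)) i = (blk π i).image f := by
  simpa [blk] using List.getD_map (Finset.image f) (l := π) (d := ∅) (n := i)

/- `Finset.min` is `WithTop ℕ`-valued: the `WithBot ℕ` ascription copied from `inv` only picks
the cast, and `<` is the order of `WithTop ℕ`. -/
open Classical in
theorem card_filter_min_lt_image (hf : StrictMono f) (B C : Finset ℕ) :
    ((B.image f).filter (fun (a : ℕ) => (C.image f).min < (a : WithBot ℕ))).card
      = (B.filter (fun (a : ℕ) => C.min < (a : WithBot ℕ))).card := by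
  rw [Finset.filter_image, Finset.card_image_of_injective _ hf.injective, min_image hf]
  congr 1
  refine Finset.filter_congr fun a _ => ?_
  induction C.min using WithTop.recTopCoe with
  | top => exact iff_of_false not_top_lt not_top_lt
  | coe b => exact WithTop.coe_lt_coe.trans (hf.lt_iff_lt.trans WithTop.coe_lt_coe.symm)

theorem inv_map_image (hf : StrictMono f) (π : List (Finset ℕ)) :
    inv (π.map (Finset.image f)) = inv π := by
  unfold inv
  rw [List.length_map]
  refine Finset.sum_congr rfl fun i _ => Finset.sum_congr rfl fun j _ => ?_
  rw [blk_map_image, blk_map_image, card_filter_min_lt_image hf]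

theorem sigmaWord_map_image (hf : StrictMono f) (π : List (Finset ℕ)) :
    sigmaWord (π.map (Finset.image f)) = (sigmaWord π).map f := by
  simp only [sigmaWord, List.map_flatten, List.map_map, Function.comp_def, sort_image hf,
    List.map_reverse]

theorem indWord_map_image (hf : Function.Injective f) (π : List (Finset ℕ)) :
    indWord (π.map (Finset.image f)) = indWord π := by
  simp only [indWord, List.zipIdx_map, List.map_map, Function.comp_def,
    Prod.map_fst, Prod.map_snd, id, Finset.card_image_of_injective _ hf]

theorem maj_map_image (hf : StrictMono f) (π : List (Finset ℕ)) :
    maj (π.map (Finset.image f)) = maj π := by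
  unfold maj
  rw [sigmaWord_map_image hf, indWord_map_image hf.injective, List.length_map]
  refine Finset.sum_congr rfl fun i hi => ?_
  have hi : i + 1 < (sigmaWord π).length := by rw [Finset.mem_range] at hi; omega
  simp only [getD_map_lt_getD_map_iff hf hi (Nat.lt_of_succ_lt hi)]

theorem majW_map (hf : StrictMono f) (w : List ℕ) : majW (w.map f) = majW w := by
  unfold majW
  rw [List.length_map]
  refine Finset.sum_congr rfl fun i hi => ?_
  have hi : i + 1 < w.length := by rw [Finset.mem_range] at hi; omega
  simp only [getD_map_lt_getD_map_iff hf hi (Nat.lt_of_succ_lt hi)]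

theorem dinv_map_image (hf : StrictMono f) (π : List (Finset ℕ)) :
    dinv (π.map (Finset.image f)) = dinv π := by
  unfold dinv
  rw [List.length_map]
  refine Finset.sum_congr rfl fun i _ => Finset.sum_congr rfl fun j _ => ?_
  simp only [blk_map_image, Finset.card_image_of_injective _ hf.injective, sort_image hf]
  congr 3 <;> refine Finset.filter_congr fun h hh => and_congr_right fun hj => ?_ <;>
    refine getD_map_lt_getD_map_iff hf ?_ ?_ <;>
    simp_all only [Finset.mem_range, Finset.length_sort]

theorem miniword_map_image (hf : StrictMono f) (π : List (Finset ℕ)) :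
    miniword (π.map (Finset.image f)) = (miniword π).map f := by
  induction π with
  | nil => rfl
  | cons B π ih =>
    rw [List.map_cons, miniword, ih, miniword]
    cases miniword π with
    | nil => exact sort_image hf B
    | cons s w =>
      simp only [List.map_cons, List.map_append, filter_lt_image hf, filter_le_image hf,
        sort_image hf]

theorem minimaj_map_image (hf : StrictMono f) (π : List (Finset ℕ)) :
    minimaj (π.map (Finset.image f)) = minimaj π := by
  rw [minimaj, miniword_map_image hf, majW_map hf, minimaj]

theorem content_zero_cons (r : ℕ) (β : List ℕ) :
    content 0 (r :: β) = (content r β).map (· + 1) := by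
  simp only [content, ← Multiset.coe_mapAddMonoidHom, map_add, map_sum]
  simp [Finset.sum_range_succ', Multiset.map_replicate, add_comm]

theorem sum_val_map_image (hf : Function.Injective f) (π : List (Finset ℕ)) :
    ((π.map (Finset.image f)).map Finset.val).sum = ((π.map Finset.val).sum).map f := by
  rw [← Multiset.coe_mapAddMonoidHom, map_list_sum, List.map_map, List.map_map]
  congr 1
  exact List.map_congr_left fun B _ => Finset.image_val_of_injOn hf.injOn

theorem pos_of_mem_of_isOPall_zero_cons {r k : ℕ} {β : List ℕ} {ρ : List (Finset ℕ)}
    (hρ : IsOPall 0 (r :: β) k ρ) {B : Finset ℕ} (hB : B ∈ ρ) {a : ℕ} (ha : a ∈ B) :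
    0 < a := by
  have hmem : a ∈ (ρ.map Finset.val).sum :=
    Multiset.mem_of_le (List.le_sum_of_mem (List.mem_map_of_mem hB)) ha
  rw [hρ.2.2, content_zero_cons] at hmem
  obtain ⟨b, -, rfl⟩ := Multiset.mem_map.mp hmem
  exact b.succ_pos

theorem isOP_zero_cons_iff {r k : ℕ} {β : List ℕ} {ρ : List (Finset ℕ)} :
    IsOP 0 (r :: β) k ρ ↔ IsOPall 0 (r :: β) k ρ := by
  refine ⟨And.left, fun hρ => ⟨hρ, fun h0 => ?_⟩⟩
  rcases ρ.eq_nil_or_concat with rfl | ⟨L, B, rfl⟩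
  · simp at h0
  · exact lt_irrefl 0 (pos_of_mem_of_isOPall_zero_cons hρ (B := B) (by simp) (by simpa using h0))

theorem map_image_pred_succ {ρ : List (Finset ℕ)} (hρ : ∀ B ∈ ρ, ∀ a ∈ B, 0 < a) :
    (ρ.map (Finset.image (· - 1))).map (Finset.image (· + 1)) = ρ := by
  rw [List.map_map]
  refine (List.map_congr_left fun B hB => ?_).trans ρ.map_id
  rw [Function.comp_apply, Finset.image_image]
  exact (Finset.image_congr (g := id) fun a ha => Nat.sub_add_cancel (hρ B hB a ha)).trans
    B.image_id

theorem bijOn_map_image_succ (r k : ℕ) (β : List ℕ) :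
    Set.BijOn (fun π : List (Finset ℕ) => π.map (Finset.image (· + 1)))
      {π | IsOPall r β k π} {π | IsOP 0 (r :: β) k π} := by
  have hinj : Function.Injective (· + 1 : ℕ → ℕ) := add_left_injective 1
  refine ⟨fun π ⟨hlen, hne, hcont⟩ => isOP_zero_cons_iff.mpr ⟨?_, ?_, ?_⟩,
    (List.map_injective_iff.mpr (Finset.image_injective hinj)).injOn, fun ρ hρ => ?_⟩
  · rw [List.length_map, hlen]
  · exact List.forall_mem_map.mpr fun B hB => (hne B hB).image _
  · rw [sum_val_map_image hinj, hcont, content_zero_cons]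
  · have hall := isOP_zero_cons_iff.mp hρ
    have hpred := map_image_pred_succ fun B hB a ha => pos_of_mem_of_isOPall_zero_cons hall hB ha
    obtain ⟨hlen, hne, hcont⟩ := hall
    refine ⟨ρ.map (Finset.image (· - 1)), ⟨by rw [List.length_map, hlen], ?_, ?_⟩, hpred⟩
    · exact List.forall_mem_map.mpr fun B hB => (hne B hB).image _
    · apply Multiset.map_injective hinj
      rw [← sum_val_map_image hinj, hpred, hcont, content_zero_cons]

theorem Dall_eq_D_zero_cons (r k : ℕ) (β : List ℕ) {stat : List (Finset ℕ) → ℕ}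
    (hstat : ∀ π, stat (π.map (Finset.image (· + 1))) = stat π) :
    Dall r β k stat = D 0 (r :: β) k stat :=
  finsum_mem_eq_of_bijOn _ (bijOn_map_image_succ r k β) fun π _ => by rw [hstat]

end omp

theorem addOne_bijection_general (r k : ℕ) (β : List ℕ) :
    Set.BijOn (fun π : List (Finset ℕ) => π.map (Finset.image (· + 1)))
      {π | omp.IsOPall r β k π} {π | omp.IsOP 0 (r :: β) k π} ∧
    (∀ π, omp.IsOPall r β k π →
      omp.inv (π.map (Finset.image (· + 1))) = omp.inv π ∧
      omp.maj (π.map (Finset.image (· + 1))) = omp.maj π ∧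
      omp.dinv (π.map (Finset.image (· + 1))) = omp.dinv π ∧
      omp.minimaj (π.map (Finset.image (· + 1))) = omp.minimaj π) ∧
    omp.Dall r β k omp.inv = omp.D 0 (r :: β) k omp.inv ∧
    omp.Dall r β k omp.maj = omp.D 0 (r :: β) k omp.maj ∧
    omp.Dall r β k omp.dinv = omp.D 0 (r :: β) k omp.dinv ∧
    omp.Dall r β k omp.minimaj = omp.D 0 (r :: β) k omp.minimaj := by
  have hsucc : StrictMono (· + 1 : ℕ → ℕ) := strictMono_id.add_const 1
  exact ⟨omp.bijOn_map_image_succ r k β,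
    fun π _ => ⟨omp.inv_map_image hsucc π, omp.maj_map_image hsucc π,
      omp.dinv_map_image hsucc π, omp.minimaj_map_image hsucc π⟩,
    omp.Dall_eq_D_zero_cons r k β (omp.inv_map_image hsucc),
    omp.Dall_eq_D_zero_cons r k β (omp.maj_map_image hsucc),
    omp.Dall_eq_D_zero_cons r k β (omp.dinv_map_image hsucc),
    omp.Dall_eq_D_zero_cons r k β (omp.minimaj_map_image hsucc)⟩

/-- Adding `1` to every letter is a statistic-preserving bijection from
`OP^all_{r;β,k}` onto `OP_{0;(r,β_1,…,β_m),k}`; consequently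
`D^{stat+}_{r;β,k} = D^{stat}_{0;(r,β_1,…,β_m),k}` for each of the four statistics. -/
theorem addOne_bijection (n r k : ℕ) (hk : 1 ≤ k) (β : List ℕ) (hβ : β.sum = n) :
    Set.BijOn (fun π : List (Finset ℕ) => π.map (Finset.image (· + 1)))
      {π | omp.IsOPall r β k π} {π | omp.IsOP 0 (r :: β) k π} ∧
    (∀ π, omp.IsOPall r β k π →
      omp.inv (π.map (Finset.image (· + 1))) = omp.inv π ∧
      omp.maj (π.map (Finset.image (· + 1))) = omp.maj π ∧
      omp.dinv (π.map (Finset.image (· + 1))) = omp.dinv π ∧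
      omp.minimaj (π.map (Finset.image (· + 1))) = omp.minimaj π) ∧
    omp.Dall r β k omp.inv = omp.D 0 (r :: β) k omp.inv ∧
    omp.Dall r β k omp.maj = omp.D 0 (r :: β) k omp.maj ∧
    omp.Dall r β k omp.dinv = omp.D 0 (r :: β) k omp.dinv ∧
    omp.Dall r β k omp.minimaj = omp.D 0 (r :: β) k omp.minimaj :=
  addOne_bijection_general r k β
end

section
/- Let m≥1 and r≥0 be integers and let w=w_1⋯w_N be a word with all letters in {0,1,…,m}, exactly r letters equal to 0, and last letter w_N≠0. Let c.w be the word obtained by replacing every letter j of w by j−1 modulo m+1 (so 0 is replaced by m and j≥1 is replaced by j−1). Then maj(c.w) = maj(w) + r. -/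
open scoped BigOperators

/-!
Reading maj as a sum over adjacent pairs, the shift `j ↦ j - 1 (mod m+1)` creates a descent
at `(x, y)` when `x = 0` and destroys one when `y = 0`, and fixes every other descent status.
Peeling off the first letter, `maj (a :: b :: t) = [b < a] + maj (b :: t) + des (b :: t)`, so an
induction tracks maj and the number of descents together: each zero in position `i` contributes
`+i` from the pair it starts and `-(i-1)` from the pair it ends, a net `+1`; a zero in the last
position would start no pair, which is why the last letter must be nonzero.
-/

namespace omp

def desW (w : List ℕ) : ℕ :=
  ∑ i ∈ Finset.range (w.length - 1), if w.getD (i + 1) 0 < w.getD i 0 then 1 else 0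

@[simp] lemma desW_singleton (a : ℕ) : desW [a] = 0 := rfl

@[simp] lemma majW_singleton (a : ℕ) : majW [a] = 0 := rfl

lemma desW_cons_cons (a b : ℕ) (t : List ℕ) :
    desW (a :: b :: t) = (if b < a then 1 else 0) + desW (b :: t) := by
  simp only [desW, List.length_cons, Nat.add_sub_cancel]
  rw [Finset.sum_range_succ', add_comm]
  rfl

lemma majW_cons_cons (a b : ℕ) (t : List ℕ) :
    majW (a :: b :: t) = (if b < a then 1 else 0) + majW (b :: t) + desW (b :: t) := by
  simp only [majW, desW, List.length_cons, Nat.add_sub_cancel]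
  rw [Finset.sum_range_succ', add_assoc, ← Finset.sum_add_distrib, add_comm]
  congr 1
  refine Finset.sum_congr rfl fun i _ => ?_
  show (if (b :: t).getD (i + 1) 0 < (b :: t).getD i 0 then i + 1 + 1 else 0) = _
  split_ifs <;> rfl

/-- Replacing each letter `x` by `f x` creates a descent at `(x, y)` exactly when `x = 0`
and destroys one exactly when `y = 0` (stated with both sides moved to avoid subtraction). -/
def DescentsShiftAtZeros (f : ℕ → ℕ) (w : List ℕ) : Prop :=
  ∀ x ∈ w, ∀ y ∈ w, (if y = 0 then 1 else 0) + (if f y < f x then 1 else 0) =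
    (if y < x then 1 else 0) + (if x = 0 then 1 else 0)

lemma DescentsShiftAtZeros.of_cons {f : ℕ → ℕ} {a : ℕ} {t : List ℕ}
    (hf : DescentsShiftAtZeros f (a :: t)) : DescentsShiftAtZeros f t :=
  fun x hx y hy => hf x (.tail _ hx) y (.tail _ hy)

section DescentsShiftAtZeros

variable {f : ℕ → ℕ} {a : ℕ} {t : List ℕ}

theorem desW_map (hf : DescentsShiftAtZeros f (a :: t))
    (hlast : (a :: t).getLast (List.cons_ne_nil a t) ≠ 0) :
    desW ((a :: t).map f) = desW (a :: t) + if a = 0 then 1 else 0 := by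
  induction t generalizing a with
  | nil => simpa using hlast
  | cons b t ih =>
    have hb := ih hf.of_cons hlast
    have hab := hf a (by simp) b (by simp)
    simp only [List.map_cons, desW_cons_cons] at hb ⊢
    omega

theorem majW_map_s10 (hf : DescentsShiftAtZeros f (a :: t))
    (hlast : (a :: t).getLast (List.cons_ne_nil a t) ≠ 0) :
    majW ((a :: t).map f) = majW (a :: t) + (a :: t).count 0 := by
  induction t generalizing a with
  | nil => simpa [List.count_singleton] using hlast
  | cons b t ih =>
    have hb := ih hf.of_cons hlast
    have hdes := desW_map hf.of_cons hlast
    have hab := hf a (by simp) b (by simp)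
    simp only [List.map_cons, majW_cons_cons, List.count_cons, beq_iff_eq] at hb hdes ⊢
    omega

end DescentsShiftAtZeros

lemma add_mod_add_one_eq_ite {m c : ℕ} (hc : c ≤ m) :
    (c + m) % (m + 1) = if c = 0 then m else c - 1 := by
  split_ifs with h
  · simp [h]
  · rw [show c + m = (c - 1) + (m + 1) by omega, Nat.add_mod_right, Nat.mod_eq_of_lt (by omega)]

lemma descentsShiftAtZeros_add_mod {m : ℕ} {w : List ℕ} (hlet : ∀ x ∈ w, x ≤ m) :
    DescentsShiftAtZeros (fun j => (j + m) % (m + 1)) w := by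
  intro x hx y hy
  have hxm := hlet x hx
  have hym := hlet y hy
  simp only [add_mod_add_one_eq_ite hxm, add_mod_add_one_eq_ite hym]
  split_ifs <;> omega

end omp

theorem maj_cycle_shift_general (m r : ℕ) (w : List ℕ) (hw : w ≠ [])
    (hlet : ∀ x ∈ w, x ≤ m) (hr : w.count 0 = r) (hlast : w.getLast hw ≠ 0) :
    omp.majW (w.map (fun j => (j + m) % (m + 1))) = omp.majW w + r := by
  obtain ⟨a, t, rfl⟩ := List.exists_cons_of_ne_nil hw
  rw [← hr]
  exact omp.majW_map_s10 (omp.descentsShiftAtZeros_add_mod hlet) hlast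

/-- If `w` has letters in `{0,…,m}`, exactly `r` zeros, and a nonzero last
letter, then the letterwise shift `j ↦ j − 1 (mod m+1)` increases the major index by `r`. -/
theorem maj_cycle_shift (m r : ℕ) (hm : 1 ≤ m) (w : List ℕ) (hw : w ≠ [])
    (hlet : ∀ x ∈ w, x ≤ m) (hr : w.count 0 = r) (hlast : w.getLast hw ≠ 0) :
    omp.majW (w.map (fun j => (j + m) % (m + 1))) = omp.majW w + r :=
  maj_cycle_shift_general m r w hw hlet hr hlast
end
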